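/- If a search T of a PTS S has not found a violation of an LTL+ formula φ, then the set of execution paths of S_T satisfying φ that are not in B_{S_T}^φ(T) has measure zero, and consequently μ_{S_T}(B_{S_T}^φ(T)) = μ_{S_T}({ e ∈ Exec_{S_T} : e ⊨_{S_T} φ }). -/

import Mathlib

open MeasureTheory

/- ## LTL⁺ syntax and semantics -/

inductive LTLPlus (AP : Type) : Type where
  | tt : LTLPlus AP
  | ff : LTLPlus AP
  | atom : AP → LTLPlus AP
  | and : LTLPlus AP → LTLPlus AP → LTLPlus AP
  | or : LTLPlus AP → LTLPlus AP → LTLPlus AP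
  | next : LTLPlus AP → LTLPlus AP
  | untl : LTLPlus AP → LTLPlus AP → LTLPlus AP
  | release : LTLPlus AP → LTLPlus AP → LTLPlus AP

variable {AP : Type}

/-- The suffix `ρ[k…]` of an infinite word. -/
def shift (ρ : ℕ → Set AP) (k : ℕ) : ℕ → Set AP := fun n => ρ (n + k)

/-- Standard LTL satisfaction for the positive fragment. -/
def LTLSat : LTLPlus AP → (ℕ → Set AP) → Prop
  | .tt, _ => True
  | .ff, _ => False
  | .atom a, ρ => a ∈ ρ 0
  | .and φ ψ, ρ => LTLSat φ ρ ∧ LTLSat ψ ρ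
  | .or φ ψ, ρ => LTLSat φ ρ ∨ LTLSat ψ ρ
  | .next φ, ρ => LTLSat φ (shift ρ 1)
  | .untl φ ψ, ρ => ∃ j, LTLSat ψ (shift ρ j) ∧ ∀ i < j, LTLSat φ (shift ρ i)
  | .release φ ψ, ρ => ∀ j, LTLSat ψ (shift ρ j) ∨ ∃ i < j, LTLSat φ (shift ρ i)

/-- Concatenation `σρ` of a finite word with an infinite word. -/
def wcat (σ : List (Set AP)) (ρ : ℕ → Set AP) : ℕ → Set AP :=
  fun n => if h : n < σ.length then σ.get ⟨n, h⟩ else ρ (n - σ.length)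

/- ## Probabilistic transition systems -/

variable {State Tr : Type}

structure PTS (State Tr AP : Type) where
  states : Set State
  transitions : Set Tr
  countable_states : states.Countable
  countable_transitions : transitions.Countable
  init : State
  init_mem : init ∈ states
  source : Tr → State
  target : Tr → State
  prob : Tr → ℝ
  label : State → Set AP
  source_mem : ∀ t ∈ transitions, source t ∈ states
  target_mem : ∀ t ∈ transitions, target t ∈ states
  prob_pos : ∀ t ∈ transitions, 0 < prob t
  prob_le_one : ∀ t ∈ transitions, prob t ≤ 1
  prob_sum : ∀ s ∈ states,
    (∑' t : { t : Tr // t ∈ transitions ∧ source t = s }, prob t.1) = 1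

/-- An execution path: an infinite sequence of transitions starting at the
initial state, with matching targets and sources. -/
def PTS.IsExec (S : PTS State Tr AP) (e : ℕ → Tr) : Prop :=
  (∀ i, e i ∈ S.transitions) ∧ S.source (e 0) = S.init ∧
    ∀ i, S.target (e i) = S.source (e (i + 1))

/-- The finite sequence `l` is a prefix of the infinite sequence `e`. -/
def IsPrefixOf (l : List Tr) (e : ℕ → Tr) : Prop :=
  ∀ i : ℕ, ∀ h : i < l.length, l.get ⟨i, h⟩ = e i

/-- `l` is a finite prefix of some execution path of `S`, i.e. `l ∈ pref(Exec_S)`. -/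
def PTS.IsPrefExec (S : PTS State Tr AP) (l : List Tr) : Prop :=
  ∃ e, S.IsExec e ∧ IsPrefixOf l e

/-- The basic cylinder set `B_S^l` of a finite sequence of transitions. -/
def PTS.Cyl (S : PTS State Tr AP) (l : List Tr) : Set (ℕ → Tr) :=
  { e | S.IsExec e ∧ IsPrefixOf l e }

/-- `S'` extends the search `T` of `S`. -/
def PTS.Extends (S' S : PTS State Tr AP) (T : Finset Tr) : Prop :=
  (∀ t ∈ T, t ∈ S'.transitions) ∧ S'.init = S.init ∧
    ∀ t ∈ T, S'.source t = S.source t ∧ S'.target t = S.target t ∧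
      S'.prob t = S.prob t ∧
      S'.label (S'.source t) = S.label (S.source t) ∧
      S'.label (S'.target t) = S.label (S.target t)

/-- The trace of an execution path. -/
def PTS.traceOf (S : PTS State Tr AP) (e : ℕ → Tr) : ℕ → Set AP :=
  fun i => S.label (S.source (e i))

/-- Satisfaction `e ⊨_S φ` of a linear-time property (a set of infinite words). -/
def PTS.SatPath (S : PTS State Tr AP) (e : ℕ → Tr) (φ : Set (ℕ → Set AP)) : Prop :=
  S.traceOf e ∈ φ

instance : MeasurableSpace (ℕ → Tr) := ⊤

/-- `μ` behaves as the cylinder measure of the PTS `S`: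
`μ(B_S^{t₁…tₙ}) = Π prob(tᵢ)`. -/
def CylSpec (S : PTS State Tr AP) (μ : Measure (ℕ → Tr)) : Prop :=
  ∀ l : List Tr, S.IsPrefExec l →
    μ (S.Cyl l) = ENNReal.ofReal ((l.map S.prob).prod)

/-- The set `B_S^φ(T)`: union of the basic cylinder sets over `e ∈ T*` all of
whose execution paths satisfy `φ`. -/
def PTS.BPhi (S : PTS State Tr AP) (T : Finset Tr) (φ : Set (ℕ → Set AP)) :
    Set (ℕ → Tr) :=
  ⋃ l ∈ { l : List Tr | (∀ t ∈ l, t ∈ T) ∧ ∀ e ∈ S.Cyl l, S.SatPath e φ }, S.Cyl l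

/-- The set `E_S^φ(T)`. -/
def PTS.ESet (S : PTS State Tr AP) (T : Finset Tr) (φ : Set (ℕ → Set AP)) :
    Set (List Tr) :=
  { l | (∀ t ∈ l, t ∈ T) ∧ S.IsPrefExec l ∧ ∀ e ∈ S.Cyl l, S.SatPath e φ }

/-- The set `ME_S^φ(T)` of prefix-minimal elements of `E_S^φ(T)`. -/
def PTS.MESet (S : PTS State Tr AP) (T : Finset Tr) (φ : Set (ℕ → Set AP)) :
    Set (List Tr) :=
  { l ∈ S.ESet T φ | 0 < l.length → ∃ e ∈ S.Cyl l.dropLast, ¬ S.SatPath e φ }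

/-- The progress measure, relative to an assignment `M` of (cylinder) measures
to PTSs: the infimum over all extensions `S'` of `T` of `μ_{S'}(B_{S'}^φ(T))`. -/
noncomputable def progM (M : PTS State Tr AP → Measure (ℕ → Tr))
    (S : PTS State Tr AP) (T : Finset Tr) (φ : Set (ℕ → Set AP)) : ENNReal :=
  ⨅ S' : { S' : PTS State Tr AP // S'.Extends S T }, M S'.1 ((S'.1).BPhi T φ)

/-- The search `T` of `S` has not found a violation of `φ`. -/
def NotFoundViolation (S : PTS State Tr AP) (T : Finset Tr)
    (φ : Set (ℕ → Set AP)) : Prop :=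
  ∃ S' : PTS State Tr AP, S'.Extends S T ∧ ∀ e, S'.IsExec e → S'.SatPath e φ

/- ## The minimal extension S_T -/

open Classical in
/-- `out_S(s)`: total explored outgoing probability of `s`. -/
noncomputable def outP (S : PTS State Tr AP) (T : Finset Tr) (s : State) : ℝ :=
  ∑ t ∈ T.filter (fun t => S.source t = s), S.prob t

/-- The set `S^T_S` of explored states. -/
def STStates (S : PTS State Tr AP) (T : Finset Tr) : Set State :=
  S.source '' ↑T ∪ S.target '' ↑T ∪ {S.init}

/-- `ST` is (a copy of) the minimal extension `S_T` of the search `T` of `S`: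
it has the explored states plus a fresh sink state `s⊥` with empty label and a
probability-one self loop `t⊥`, the explored transitions with unchanged data,
and, for each explored state with explored outgoing probability less than one,
a fresh transition to the sink carrying the residual probability. -/
def IsMinExt (S : PTS State Tr AP) (T : Finset Tr) (ST : PTS State Tr AP) : Prop :=
  ∃ (sbot : State) (tbot : Tr) (ts : State → Tr),
    sbot ∉ STStates S T ∧
    (∀ s, ts s ∉ T) ∧ tbot ∉ T ∧ (∀ s, ts s ≠ tbot) ∧
    Set.InjOn ts { s ∈ STStates S T | outP S T s < 1 } ∧
    ST.states = STStates S T ∪ {sbot} ∧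
    ST.transitions = ↑T ∪ ts '' { s ∈ STStates S T | outP S T s < 1 } ∪ {tbot} ∧
    ST.init = S.init ∧
    (∀ t ∈ T, ST.source t = S.source t ∧ ST.target t = S.target t ∧
      ST.prob t = S.prob t) ∧
    (∀ s ∈ STStates S T, outP S T s < 1 →
      ST.source (ts s) = s ∧ ST.target (ts s) = sbot ∧
      ST.prob (ts s) = 1 - outP S T s) ∧
    ST.source tbot = sbot ∧ ST.target tbot = sbot ∧ ST.prob tbot = 1 ∧
    ST.label sbot = ∅ ∧ (∀ s ∈ STStates S T, ST.label s = S.label s)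

/- ## Truncations and the prefix metric -/

/-- `e[n]`: the execution path `e` truncated at length `n`. -/
def trunc (e : ℕ → Tr) (n : ℕ) : List Tr := (List.range n).map e

/-- The distance `d(e₁,e₂) = inf { 2^{-n} : e₁[n] = e₂[n] }`. -/
noncomputable def pathDist (e₁ e₂ : ℕ → Tr) : ℝ :=
  sInf ((fun n : ℕ => ((1 : ℝ) / 2) ^ n) '' { n | trunc e₁ n = trunc e₂ n })

/-- `A` is closed with respect to the metric `pathDist`. -/
def ClosedPaths (A : Set (ℕ → Tr)) : Prop :=
  ∀ e, (∀ ε : ℝ, 0 < ε → ∃ e' ∈ A, pathDist e' e < ε) → e ∈ A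

/-! By monotonicity of LTL⁺, an execution of `S_T` that satisfies `φ` and leaves the explored
transitions `T` is certified by its explored prefix: once outside `T` it is trapped in the sink,
whose label is empty, so every path through that prefix has a pointwise larger trace. Executions
that stay in `T` forever satisfy `φ`, being executions of every extension of `T`. The uncertified
paths satisfying `φ` therefore stay in `T` although each of their prefixes has a violating
continuation, which has to leave `T`. Since `S_T` is finite, wherever `T` can be left it can be
left in a fixed number `K` of steps with probability at least a fixed `δ > 0`, so the prefixes of
length `K j` of such paths carry mass at most `(1 - δ) ^ j`. -/

open Filter Topology

theorem LTLSat.mono {φ : LTLPlus AP} {ρ ρ' : ℕ → Set AP} (h : ∀ i, ρ i ⊆ ρ' i) :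
    LTLSat φ ρ → LTLSat φ ρ' := by
  induction φ generalizing ρ ρ' with
  | tt => exact id
  | ff => exact id
  | atom a => exact fun ha => h 0 ha
  | and φ ψ ihφ ihψ => exact fun ⟨hφ, hψ⟩ => ⟨ihφ h hφ, ihψ h hψ⟩
  | or φ ψ ihφ ihψ => exact Or.imp (ihφ h) (ihψ h)
  | next φ ih => exact ih fun i => h (i + 1)
  | untl φ ψ ihφ ihψ =>
    exact fun ⟨j, hj, hlt⟩ =>
      ⟨j, ihψ (fun i => h (i + j)) hj, fun i hi => ihφ (fun k => h (k + i)) (hlt i hi)⟩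
  | release φ ψ ihφ ihψ =>
    exact fun hr j => (hr j).imp (ihψ fun i => h (i + j))
      fun ⟨i, hi, hφ⟩ => ⟨i, hi, ihφ (fun k => h (k + i)) hφ⟩

section Trunc

variable {Tr : Type}

@[simp] theorem length_trunc (e : ℕ → Tr) (n : ℕ) : (trunc e n).length = n := by
  simp [trunc]

theorem mem_trunc {e : ℕ → Tr} {n : ℕ} {t : Tr} : t ∈ trunc e n ↔ ∃ j < n, e j = t := by
  simp [trunc]

theorem trunc_succ (e : ℕ → Tr) (n : ℕ) :
    trunc e (n + 1) = e 0 :: trunc (fun i => e (i + 1)) n := by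
  simp [trunc, List.range_succ_eq_map, List.map_map]

theorem trunc_succ' (e : ℕ → Tr) (n : ℕ) : trunc e (n + 1) = trunc e n ++ [e n] := by
  simp [trunc, List.range_succ]

theorem isPrefixOf_iff_eq_trunc {l : List Tr} {e : ℕ → Tr} :
    IsPrefixOf l e ↔ l = trunc e l.length := by
  simp [IsPrefixOf, trunc, List.ext_get_iff]

theorem isPrefixOf_trunc (e : ℕ → Tr) (n : ℕ) : IsPrefixOf (trunc e n) e := by
  simp [IsPrefixOf, trunc]

theorem IsPrefixOf.of_append {u v : List Tr} {e : ℕ → Tr} (h : IsPrefixOf (u ++ v) e) :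
    IsPrefixOf u e := fun i hi => by
  simpa [List.getElem_append_left hi] using h i (by simp; omega)

end Trunc

namespace PTS

variable {State Tr AP : Type} (P : PTS State Tr AP)

theorem summable_prob {s : State} (hs : s ∈ P.states) :
    Summable fun t : { t // t ∈ P.transitions ∧ P.source t = s } => P.prob t.1 := by
  by_contra h
  simpa [tsum_eq_zero_of_not_summable h] using P.prob_sum s hs

theorem exists_transition_of_mem_states {s : State} (hs : s ∈ P.states) :
    ∃ t ∈ P.transitions, P.source t = s := by
  by_contra! h
  have : IsEmpty { t // t ∈ P.transitions ∧ P.source t = s } := ⟨fun t => h t.1 t.2.1 t.2.2⟩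
  simpa using P.prob_sum s hs

theorem states_finite (h : P.transitions.Finite) : P.states.Finite :=
  (h.image P.source).subset fun _ hs => P.exists_transition_of_mem_states hs

theorem sum_prob_le_one {s : State} (hs : s ∈ P.states) (G : Finset Tr)
    (hG : ∀ t ∈ G, t ∈ P.transitions ∧ P.source t = s) : ∑ t ∈ G, P.prob t ≤ 1 := by
  classical
  rw [← Finset.sum_subtype_of_mem P.prob hG, ← P.prob_sum s hs]
  exact (P.summable_prob hs).sum_le_tsum _ fun t _ => (P.prob_pos t.1 t.2.1).le

theorem IsPrefExec.mem_transitions {P : PTS State Tr AP} {l : List Tr} (h : P.IsPrefExec l) :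
    ∀ t ∈ l, t ∈ P.transitions := by
  obtain ⟨e, he, hpre⟩ := h
  intro t ht
  obtain ⟨j, -, rfl⟩ := mem_trunc.1 (isPrefixOf_iff_eq_trunc.1 hpre ▸ ht)
  exact he.1 j

theorem BPhi_subset_satPaths (T : Finset Tr) (Φ : Set (ℕ → Set AP)) :
    P.BPhi T Φ ⊆ { e | P.IsExec e ∧ P.SatPath e Φ } := fun e he => by
  obtain ⟨l, hl, hel⟩ := Set.mem_iUnion₂.1 he
  exact ⟨hel.1, hl.2 e hel⟩

def pathProb (l : List Tr) : ℝ := (l.map P.prob).prod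

def lastState (s : State) (l : List Tr) : State := l.foldl (fun _ t => P.target t) s

@[simp] theorem pathProb_nil : P.pathProb [] = 1 := rfl

@[simp] theorem pathProb_append (u v : List Tr) :
    P.pathProb (u ++ v) = P.pathProb u * P.pathProb v := by
  simp [pathProb]

theorem pathProb_pos {l : List Tr} (hl : ∀ t ∈ l, t ∈ P.transitions) : 0 < P.pathProb l :=
  List.prod_pos fun _ hx => by
    obtain ⟨t, ht, rfl⟩ := List.mem_map.1 hx
    exact P.prob_pos t (hl t ht)

theorem lastState_append (s : State) (u v : List Tr) :
    P.lastState s (u ++ v) = P.lastState (P.lastState s u) v :=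
  List.foldl_append

theorem lastState_trunc {e : ℕ → Tr} (he : ∀ i, P.target (e i) = P.source (e (i + 1))) :
    ∀ n, P.lastState (P.source (e 0)) (trunc e n) = P.source (e n)
  | 0 => rfl
  | n + 1 => by rw [trunc_succ', lastState_append, ← he n]; rfl

variable (F : Finset Tr)

open Classical in
noncomputable def paths : ℕ → State → Finset (List Tr)
  | 0, _ => {[]}
  | n + 1, s =>
    (F.filter (P.source · = s)).biUnion fun t => (paths n (P.target t)).image (t :: ·)

@[simp] theorem mem_paths_zero {s : State} {w : List Tr} : w ∈ P.paths F 0 s ↔ w = [] := by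
  simp [paths]

theorem mem_paths_succ {n : ℕ} {s : State} {w : List Tr} :
    w ∈ P.paths F (n + 1) s ↔
      ∃ t ∈ F, P.source t = s ∧ ∃ v ∈ P.paths F n (P.target t), t :: v = w := by
  simp [paths, and_assoc]

theorem length_of_mem_paths {n : ℕ} {s : State} {w : List Tr} (hw : w ∈ P.paths F n s) :
    w.length = n := by
  induction n generalizing s w with
  | zero => simp_all
  | succ n ih =>
    obtain ⟨t, -, -, v, hv, rfl⟩ := (P.mem_paths_succ F).1 hw
    simp [ih hv]

theorem mem_of_mem_paths {n : ℕ} {s : State} {w : List Tr} (hw : w ∈ P.paths F n s) :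
    ∀ t ∈ w, t ∈ F := by
  induction n generalizing s w with
  | zero => simp_all
  | succ n ih =>
    obtain ⟨t, ht, -, v, hv, rfl⟩ := (P.mem_paths_succ F).1 hw
    simpa [ht] using ih hv

open Classical in
theorem paths_add (n k : ℕ) (s : State) :
    P.paths F (n + k) s =
      (P.paths F n s).biUnion fun u => (P.paths F k (P.lastState s u)).image (u ++ ·) := by
  induction n generalizing s with
  | zero => ext w; simp [lastState]
  | succ n ih =>
    ext w
    rw [Nat.add_right_comm, mem_paths_succ]
    simp only [ih, Finset.mem_biUnion, Finset.mem_image, mem_paths_succ]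
    constructor
    · rintro ⟨t, ht, hts, -, ⟨u, hu, v, hv, rfl⟩, rfl⟩
      exact ⟨t :: u, ⟨t, ht, hts, u, hu, rfl⟩, v, hv, rfl⟩
    · rintro ⟨-, ⟨t, ht, hts, u, hu, rfl⟩, v, hv, rfl⟩
      exact ⟨t, ht, hts, u ++ v, ⟨u, hu, v, hv, rfl⟩, rfl⟩

theorem append_mem_paths {n k : ℕ} {s : State} {u v : List Tr} (hu : u ∈ P.paths F n s)
    (hv : v ∈ P.paths F k (P.lastState s u)) : u ++ v ∈ P.paths F (n + k) s := by
  classical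
  rw [paths_add]
  exact Finset.mem_biUnion.2 ⟨u, hu, Finset.mem_image_of_mem (u ++ ·) hv⟩

theorem trunc_mem_paths {e : ℕ → Tr} (hF : ∀ i, e i ∈ F)
    (he : ∀ i, P.target (e i) = P.source (e (i + 1))) (n : ℕ) :
    trunc e n ∈ P.paths F n (P.source (e 0)) := by
  induction n generalizing e with
  | zero => simp [trunc]
  | succ n ih =>
    rw [trunc_succ, mem_paths_succ]
    exact ⟨e 0, hF 0, rfl, _, he 0 ▸ ih (fun i => hF (i + 1)) (fun i => he (i + 1)), rfl⟩

open Classical in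
noncomputable def pathMass (R : List Tr → Prop) (n : ℕ) (s : State) : ℝ :=
  ∑ l ∈ (P.paths F n s).filter R, P.pathProb l

section Stochastic

variable {P F} (hF : ∀ t ∈ F, t ∈ P.transitions)
include hF

theorem lastState_mem_states {n : ℕ} {s : State} (hs : s ∈ P.states) {w : List Tr}
    (hw : w ∈ P.paths F n s) : P.lastState s w ∈ P.states := by
  induction n generalizing s w with
  | zero => simp_all [lastState]
  | succ n ih =>
    obtain ⟨t, ht, rfl, v, hv, rfl⟩ := (P.mem_paths_succ F).1 hw
    exact ih (P.target_mem t (hF t ht)) hv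

theorem pathProb_pos_of_mem_paths {n : ℕ} {s : State} {w : List Tr} (hw : w ∈ P.paths F n s) :
    0 < P.pathProb w :=
  P.pathProb_pos fun t ht => hF t (P.mem_of_mem_paths F hw t ht)

theorem sum_pathProb_paths_le_one {n : ℕ} {s : State} (hs : s ∈ P.states) :
    ∑ w ∈ P.paths F n s, P.pathProb w ≤ 1 := by
  classical
  induction n generalizing s with
  | zero => simp [paths]
  | succ n ih =>
    rw [paths, Finset.sum_biUnion]
    · calc _ = ∑ t ∈ F.filter (P.source · = s),
            P.prob t * ∑ w ∈ P.paths F n (P.target t), P.pathProb w := by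
            refine Finset.sum_congr rfl fun t _ => ?_
            rw [Finset.sum_image fun _ _ _ _ h => List.cons_injective h, Finset.mul_sum]
            simp [pathProb]
        _ ≤ ∑ t ∈ F.filter (P.source · = s), P.prob t := by
            refine Finset.sum_le_sum fun t ht => ?_
            have htP := hF t (Finset.mem_filter.1 ht).1
            exact mul_le_of_le_one_right (P.prob_pos t htP).le (ih (P.target_mem t htP))
        _ ≤ 1 := P.sum_prob_le_one hs _ fun t ht =>
            ⟨hF t (Finset.mem_filter.1 ht).1, (Finset.mem_filter.1 ht).2⟩
    · intro t₁ _ t₂ _ hne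
      simp only [Function.onFun, Finset.disjoint_left, Finset.mem_image]
      rintro _ ⟨v₁, -, rfl⟩ ⟨v₂, -, h⟩
      exact hne (List.cons_eq_cons.1 h).1.symm

theorem pathMass_le_one (R : List Tr → Prop) {n : ℕ} {s : State} (hs : s ∈ P.states) :
    P.pathMass F R n s ≤ 1 := by
  classical
  exact (Finset.sum_le_sum_of_subset_of_nonneg (Finset.filter_subset _ _) fun _ hw _ =>
    (pathProb_pos_of_mem_paths hF hw).le).trans (sum_pathProb_paths_le_one hF hs)

open Classical in
omit hF in
theorem pathMass_add (R : List Tr → Prop) (n K : ℕ) (s : State) :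
    P.pathMass F R (n + K) s = ∑ u ∈ P.paths F n s,
      ∑ v ∈ (P.paths F K (P.lastState s u)).filter (fun v => R (u ++ v)),
        P.pathProb (u ++ v) := by
  have hdisj : (P.paths F n s : Set (List Tr)).PairwiseDisjoint
      fun u => (P.paths F K (P.lastState s u)).image (u ++ ·) := by
    intro u₁ hu₁ u₂ hu₂ hne
    simp only [Function.onFun, Finset.disjoint_left, Finset.mem_image]
    rintro _ ⟨v₁, -, rfl⟩ ⟨v₂, -, h⟩
    refine hne (List.append_inj h ?_).1.symm
    rw [P.length_of_mem_paths F hu₁, P.length_of_mem_paths F hu₂]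
  rw [pathMass, Finset.sum_filter, paths_add, Finset.sum_biUnion hdisj]
  refine Finset.sum_congr rfl fun u _ => ?_
  rw [Finset.sum_image fun _ _ _ _ h => List.append_cancel_left h, Finset.sum_filter]

open Classical in
theorem sum_filter_pathProb_append_le {R : List Tr → Prop} {n K : ℕ} {s : State}
    (hs : s ∈ P.states) {u w : List Tr} (hu : u ∈ P.paths F n s)
    (hw : w ∈ P.paths F K (P.lastState s u)) (hRw : ¬ R (u ++ w)) :
    ∑ v ∈ (P.paths F K (P.lastState s u)).filter (fun v => R (u ++ v)), P.pathProb (u ++ v) ≤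
      P.pathProb u * (1 - P.pathProb w) := by
  have hsub : (P.paths F K (P.lastState s u)).filter (fun v => R (u ++ v)) ⊆
      (P.paths F K (P.lastState s u)).erase w := fun v hv => by
    obtain ⟨hv, hRv⟩ := Finset.mem_filter.1 hv
    exact Finset.mem_erase.2 ⟨fun h => hRw (h ▸ hRv), hv⟩
  calc _ ≤ ∑ v ∈ (P.paths F K (P.lastState s u)).erase w, P.pathProb (u ++ v) :=
        Finset.sum_le_sum_of_subset_of_nonneg hsub fun v hv _ => by
          rw [pathProb_append]
          exact (mul_pos (pathProb_pos_of_mem_paths hF hu)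
            (pathProb_pos_of_mem_paths hF (Finset.mem_of_mem_erase hv))).le
    _ = P.pathProb u * (∑ v ∈ P.paths F K (P.lastState s u), P.pathProb v - P.pathProb w) := by
        simp only [pathProb_append]
        rw [← Finset.mul_sum, Finset.sum_erase_eq_sub hw]
    _ ≤ P.pathProb u * (1 - P.pathProb w) := by
        gcongr
        · exact (pathProb_pos_of_mem_paths hF hu).le
        · exact sum_pathProb_paths_le_one hF (lastState_mem_states hF hs hu)

theorem pathMass_add_le {R : List Tr → Prop} (hR : ∀ u v, R (u ++ v) → R u) {n K : ℕ}
    {s : State} (hs : s ∈ P.states) {δ : ℝ}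
    (hexit : ∀ u ∈ P.paths F n s, R u →
      ∃ w ∈ P.paths F K (P.lastState s u), ¬ R (u ++ w) ∧ δ ≤ P.pathProb w) :
    P.pathMass F R (n + K) s ≤ (1 - δ) * P.pathMass F R n s := by
  classical
  rw [pathMass_add, pathMass, Finset.mul_sum,
    ← Finset.sum_filter_of_ne (p := R) fun u _ hne => ?_]
  · refine Finset.sum_le_sum fun u hu => ?_
    obtain ⟨hu, hRu⟩ := Finset.mem_filter.1 hu
    obtain ⟨w, hw, hRw, hδw⟩ := hexit u hu hRu
    calc _ ≤ P.pathProb u * (1 - P.pathProb w) := sum_filter_pathProb_append_le hF hs hu hw hRw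
      _ ≤ (1 - δ) * P.pathProb u := by
        nlinarith [pathProb_pos_of_mem_paths hF hu]
  · obtain ⟨v, hv, -⟩ := Finset.exists_ne_zero_of_sum_ne_zero hne
    exact hR u v (Finset.mem_filter.1 hv).2

theorem pathMass_mul_le_pow {R : List Tr → Prop} (hR : ∀ u v, R (u ++ v) → R u) {K : ℕ}
    {s : State} (hs : s ∈ P.states) {δ : ℝ} (hδ : δ ≤ 1)
    (hexit : ∀ n, ∀ u ∈ P.paths F n s, R u →
      ∃ w ∈ P.paths F K (P.lastState s u), ¬ R (u ++ w) ∧ δ ≤ P.pathProb w) :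
    ∀ j, P.pathMass F R (K * j) s ≤ (1 - δ) ^ j
  | 0 => by simpa using pathMass_le_one hF R hs
  | j + 1 => calc
      P.pathMass F R (K * j + K) s ≤ (1 - δ) * P.pathMass F R (K * j) s :=
        pathMass_add_le hF hR hs (hexit _)
      _ ≤ (1 - δ) * (1 - δ) ^ j :=
        mul_le_mul_of_nonneg_left (pathMass_mul_le_pow hR hs hδ hexit j) (by linarith)
      _ = (1 - δ) ^ (j + 1) := (pow_succ' _ _).symm

end Stochastic

def CanLeaveIn (T : Finset Tr) (k : ℕ) (s : State) : Prop :=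
  ∃ w ∈ P.paths F k s, ∃ t ∈ w, t ∉ T

section Finite

variable {P F} (hF : ∀ t, t ∈ F ↔ t ∈ P.transitions)
include hF

theorem paths_nonempty (n : ℕ) {s : State} (hs : s ∈ P.states) : (P.paths F n s).Nonempty := by
  induction n generalizing s with
  | zero => simp [paths]
  | succ n ih =>
    obtain ⟨t, ht, rfl⟩ := P.exists_transition_of_mem_states hs
    obtain ⟨v, hv⟩ := ih (P.target_mem t ht)
    exact ⟨t :: v, (P.mem_paths_succ F).2 ⟨t, (hF t).2 ht, rfl, v, hv, rfl⟩⟩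

theorem CanLeaveIn.mono {T : Finset Tr} {s : State} (hs : s ∈ P.states) {k K : ℕ}
    (hkK : k ≤ K) (h : P.CanLeaveIn F T k s) : P.CanLeaveIn F T K s := by
  obtain ⟨w, hw, t, htw, htT⟩ := h
  obtain ⟨v, hv⟩ := paths_nonempty hF (K - k) (lastState_mem_states (fun t => (hF t).1) hs hw)
  refine ⟨w ++ v, ?_, t, List.mem_append_left v htw, htT⟩
  simpa [Nat.add_sub_cancel' hkK] using P.append_mem_paths F hw hv

theorem exists_uniform_canLeaveIn (T : Finset Tr) :
    ∃ K, ∃ δ > 0, δ ≤ 1 ∧ ∀ s ∈ P.states, (∃ k, P.CanLeaveIn F T k s) →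
      ∃ w ∈ P.paths F K s, (∃ t ∈ w, t ∉ T) ∧ δ ≤ P.pathProb w := by
  set Z := { s ∈ P.states | ∃ k, P.CanLeaveIn F T k s }
  have hZ : Z.Finite :=
    (P.states_finite (F.finite_toSet.subset fun t => (hF t).2)).subset (Set.sep_subset _ _)
  obtain ⟨K, hK⟩ : ∃ K, ∀ s ∈ Z, P.CanLeaveIn F T K s := by
    refine ((eventually_all_finite hZ).2 fun s hs => ?_).exists (f := atTop)
    obtain ⟨k, hk⟩ := hs.2
    exact eventually_atTop.2 ⟨k, fun K hkK => hk.mono hF hs.1 hkK⟩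
  have hδ : ∀ s ∈ Z, ∀ᶠ δ in 𝓝[>] (0 : ℝ),
      ∃ w ∈ P.paths F K s, (∃ t ∈ w, t ∉ T) ∧ δ ≤ P.pathProb w := by
    intro s hs
    obtain ⟨w, hw, hleave⟩ := hK s hs
    have hpos := pathProb_pos_of_mem_paths (fun t => (hF t).1) hw
    exact (eventually_nhdsWithin_of_eventually_nhds (eventually_lt_nhds hpos)).mono
      fun δ h => ⟨w, hw, hleave, h.le⟩
  have hδ' : ∀ᶠ δ in 𝓝[>] (0 : ℝ), 0 < δ ∧ δ < 1 ∧ ∀ s ∈ Z,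
      ∃ w ∈ P.paths F K s, (∃ t ∈ w, t ∉ T) ∧ δ ≤ P.pathProb w := by
    filter_upwards [self_mem_nhdsWithin,
      eventually_nhdsWithin_of_eventually_nhds (eventually_lt_nhds one_pos),
      (eventually_all_finite hZ).2 hδ] with δ h0 h1 hw using ⟨h0, h1, hw⟩
  obtain ⟨δ, hδ0, hδ1, hδK⟩ := hδ'.exists
  exact ⟨K, δ, hδ0, hδ1.le, fun s hs hk => hδK s ⟨hs, hk⟩⟩

end Finite

variable {P}

theorem measure_biUnion_cyl_le {μ : Measure (ℕ → Tr)} (hμ : CylSpec P μ)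
    (L : Finset (List Tr)) (hL : ∀ l ∈ L, P.IsPrefExec l) :
    μ (⋃ l ∈ L, P.Cyl l) ≤ ENNReal.ofReal (∑ l ∈ L, P.pathProb l) :=
  calc μ (⋃ l ∈ L, P.Cyl l) ≤ ∑ l ∈ L, μ (P.Cyl l) := measure_biUnion_finset_le _ _
    _ = ∑ l ∈ L, ENNReal.ofReal (P.pathProb l) :=
      Finset.sum_congr rfl fun l hl => hμ l (hL l hl)
    _ = ENNReal.ofReal (∑ l ∈ L, P.pathProb l) :=
      (ENNReal.ofReal_sum_of_nonneg fun l hl => (P.pathProb_pos (hL l hl).mem_transitions).le).symm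

theorem IsExec.source_eq_of_isPrefixOf {e e' : ℕ → Tr} (he : P.IsExec e) (he' : P.IsExec e')
    {n : ℕ} (h : IsPrefixOf (trunc e n) e') : ∀ i ≤ n, P.source (e' i) = P.source (e i)
  | 0, _ => he'.2.1.trans he.2.1.symm
  | i + 1, hi => by
    have hei : e' i = e i := by simpa [trunc] using (h i (by simpa using hi)).symm
    rw [← he'.2.2, ← he.2.2, hei]

variable (P) in
def InconclusivePrefix (T : Finset Tr) (Φ : Set (ℕ → Set AP)) (l : List Tr) : Prop :=
  (∀ t ∈ l, t ∈ T) ∧ ∃ e ∈ P.Cyl l, ¬ P.SatPath e Φ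

section Inconclusive

variable {T : Finset Tr} {Φ : Set (ℕ → Set AP)}

theorem InconclusivePrefix.of_append {u v : List Tr} (h : P.InconclusivePrefix T Φ (u ++ v)) :
    P.InconclusivePrefix T Φ u :=
  ⟨fun t ht => h.1 t (List.mem_append_left v ht),
    let ⟨e, he, hΦ⟩ := h.2; ⟨e, ⟨he.1, he.2.of_append⟩, hΦ⟩⟩

theorem inconclusivePrefix_trunc {e : ℕ → Tr} (he : P.IsExec e) (hT : ∀ i, e i ∈ T)
    (hB : e ∉ P.BPhi T Φ) (n : ℕ) : P.InconclusivePrefix T Φ (trunc e n) := by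
  have hmem : ∀ t ∈ trunc e n, t ∈ T := fun t ht => by
    obtain ⟨j, -, rfl⟩ := mem_trunc.1 ht
    exact hT j
  refine ⟨hmem, ?_⟩
  by_contra! hsat
  exact hB (Set.mem_biUnion (x := trunc e n) ⟨hmem, hsat⟩ ⟨he, isPrefixOf_trunc e n⟩)

theorem InconclusivePrefix.canLeaveIn {F : Finset Tr} (hF : ∀ t, t ∈ F ↔ t ∈ P.transitions)
    (hsat : ∀ e, P.IsExec e → (∀ i, e i ∈ T) → P.SatPath e Φ)
    {u : List Tr} (h : P.InconclusivePrefix T Φ u) :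
    P.lastState P.init u ∈ P.states ∧ ∃ k, P.CanLeaveIn F T k (P.lastState P.init u) := by
  obtain ⟨e, ⟨he, hpre⟩, hΦ⟩ := h.2
  obtain ⟨i, hi⟩ : ∃ i, e i ∉ T := by
    by_contra! hT
    exact hΦ (hsat e he hT)
  have hu := isPrefixOf_iff_eq_trunc.1 hpre
  set n := u.length
  have hlast : P.lastState P.init u = P.source (e n) := by
    rw [← he.2.1, hu, lastState_trunc P he.2.2]
  have hni : n ≤ i := by
    by_contra! hin
    exact hi (h.1 _ (hu ▸ mem_trunc.2 ⟨i, by simpa using hin, rfl⟩))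
  have hpath : trunc (fun j => e (n + j)) (i + 1 - n) ∈ P.paths F (i + 1 - n) (P.source (e n)) :=
    P.trunc_mem_paths F (e := fun j => e (n + j)) (fun j => (hF _).2 (he.1 _)) (fun j => he.2.2 _) _
  refine ⟨hlast ▸ P.source_mem _ (he.1 _), i + 1 - n, _, hlast ▸ hpath, e i, ?_, hi⟩
  exact mem_trunc.2 ⟨i - n, by omega, by congr 1; omega⟩

end Inconclusive

section Sink

variable {T : Finset Tr} {sbot : State}
  (hleave : ∀ t ∈ P.transitions, t ∉ T → P.target t = sbot)
  (hsink : ∀ t ∈ P.transitions, P.source t = sbot → P.target t = sbot)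
include hleave hsink

theorem IsExec.source_eq_sink {e : ℕ → Tr} (he : P.IsExec e) {i : ℕ} (hi : e i ∉ T) :
    ∀ j, i < j → P.source (e j) = sbot := by
  have htarget : ∀ k, P.target (e (i + k)) = sbot := fun k => by
    induction k with
    | zero => exact hleave _ (he.1 i) hi
    | succ k ih => exact hsink _ (he.1 _) ((he.2.2 (i + k)).symm.trans ih)
  intro j hj
  obtain ⟨k, rfl⟩ := Nat.exists_eq_add_of_lt hj
  exact (he.2.2 (i + k)).symm.trans (htarget k)

theorem mem_BPhi_of_exists_not_mem (hlabel : P.label sbot = ∅) {φ : LTLPlus AP} {e : ℕ → Tr}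
    (he : P.IsExec e) (hφ : LTLSat φ (P.traceOf e)) (hT : ∃ i, e i ∉ T) :
    e ∈ P.BPhi T { ρ | LTLSat φ ρ } := by
  classical
  refine Set.mem_biUnion (x := trunc e (Nat.find hT)) ⟨fun t ht => ?_, fun e' he' => ?_⟩
    ⟨he, isPrefixOf_trunc e _⟩
  · obtain ⟨j, hj, rfl⟩ := mem_trunc.1 ht
    exact not_not.1 (Nat.find_min hT hj)
  · refine LTLSat.mono (fun j => ?_) hφ
    rcases le_or_gt j (Nat.find hT) with hj | hj
    · simp [traceOf, he.source_eq_of_isPrefixOf he'.1 he'.2 j hj]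
    · simp [traceOf, he.source_eq_sink hleave hsink (Nat.find_spec hT) j hj, hlabel]

open Classical in
theorem diff_BPhi_subset_biUnion_cyl {F : Finset Tr} (hF : ∀ t, t ∈ F ↔ t ∈ P.transitions)
    (hlabel : P.label sbot = ∅) (φ : LTLPlus AP) (n : ℕ) :
    { e | P.IsExec e ∧ P.SatPath e { ρ | LTLSat φ ρ } } \ P.BPhi T { ρ | LTLSat φ ρ } ⊆
      ⋃ l ∈ (P.paths F n P.init).filter (P.InconclusivePrefix T { ρ | LTLSat φ ρ }),
        P.Cyl l := by
  rintro e ⟨⟨he, hφ⟩, hB⟩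
  have hT : ∀ i, e i ∈ T := by
    by_contra! h
    exact hB (mem_BPhi_of_exists_not_mem hleave hsink hlabel he hφ h)
  have hpath : trunc e n ∈ P.paths F n P.init :=
    he.2.1 ▸ P.trunc_mem_paths F (fun i => (hF _).2 (he.1 i)) he.2.2 n
  exact Set.mem_iUnion₂.2 ⟨trunc e n, Finset.mem_filter.2
    ⟨hpath, inconclusivePrefix_trunc he hT hB n⟩, he, isPrefixOf_trunc e n⟩

theorem measure_diff_BPhi_eq_zero (hfin : P.transitions.Finite) (hlabel : P.label sbot = ∅)
    {φ : LTLPlus AP}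
    (hsat : ∀ e, P.IsExec e → (∀ i, e i ∈ T) → P.SatPath e { ρ | LTLSat φ ρ })
    {μ : Measure (ℕ → Tr)} (hμ : CylSpec P μ) :
    μ ({ e | P.IsExec e ∧ P.SatPath e { ρ | LTLSat φ ρ } } \ P.BPhi T { ρ | LTLSat φ ρ }) =
      0 := by
  classical
  set F := hfin.toFinset
  have hF : ∀ t, t ∈ F ↔ t ∈ P.transitions := fun t => hfin.mem_toFinset
  set R := P.InconclusivePrefix T { ρ | LTLSat φ ρ }
  obtain ⟨K, δ, hδ0, hδ1, hK⟩ := exists_uniform_canLeaveIn hF T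
  have hmass : ∀ j, P.pathMass F R (K * j) P.init ≤ (1 - δ) ^ j := by
    refine pathMass_mul_le_pow (fun t => (hF t).1) (fun u v h => h.of_append) P.init_mem hδ1
      fun n u _ hu => ?_
    obtain ⟨hs, hk⟩ := hu.canLeaveIn hF hsat
    obtain ⟨w, hw, ⟨t, htw, htT⟩, hδw⟩ := hK _ hs hk
    exact ⟨w, hw, fun h => htT (h.1 t (List.mem_append_right u htw)), hδw⟩
  have hcover : ∀ n, μ ({ e | P.IsExec e ∧ P.SatPath e { ρ | LTLSat φ ρ } } \
      P.BPhi T { ρ | LTLSat φ ρ }) ≤ ENNReal.ofReal (P.pathMass F R n P.init) := fun n =>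
    (measure_mono (diff_BPhi_subset_biUnion_cyl hleave hsink hF hlabel φ n)).trans
      (measure_biUnion_cyl_le hμ _ fun l hl =>
        let ⟨e, he, _⟩ := (Finset.mem_filter.1 hl).2.2; ⟨e, he⟩)
  have hlim : Tendsto (fun j => ENNReal.ofReal ((1 - δ) ^ j)) atTop (𝓝 0) := by
    simpa using ENNReal.tendsto_ofReal
      (tendsto_pow_atTop_nhds_zero_of_lt_one (by linarith) (by linarith))
  exact le_antisymm (ge_of_tendsto' hlim fun j =>
    (hcover (K * j)).trans (ENNReal.ofReal_le_ofReal (hmass j))) bot_le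

end Sink

end PTS

namespace IsMinExt

variable {State Tr AP : Type} {S ST : PTS State Tr AP} {T : Finset Tr}

theorem transitions_finite (h : IsMinExt S T ST) : ST.transitions.Finite := by
  obtain ⟨-, tbot, ts, -, -, -, -, -, -, htrans, -⟩ := h
  have hE : (STStates S T).Finite :=
    ((T.finite_toSet.image _).union (T.finite_toSet.image _)).union (Set.finite_singleton _)
  rw [htrans]
  exact (T.finite_toSet.union ((hE.subset (Set.sep_subset _ _)).image ts)).union
    (Set.finite_singleton tbot)

theorem exists_sink (h : IsMinExt S T ST) :
    ∃ sbot, ST.label sbot = ∅ ∧ (∀ t ∈ ST.transitions, t ∉ T → ST.target t = sbot) ∧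
      ∀ t ∈ ST.transitions, ST.source t = sbot → ST.target t = sbot := by
  obtain ⟨sbot, tbot, ts, hsbot, -, -, -, -, -, htrans, -, hT, hts, -, htbot, -, hlabel, -⟩ := h
  have hleave : ∀ t ∈ ST.transitions, t ∉ T → ST.target t = sbot := by
    intro t ht htT
    rw [htrans] at ht
    rcases ht with (ht | ⟨s, hs, rfl⟩) | rfl
    · exact absurd ht htT
    · exact (hts s hs.1 hs.2).2.1
    · exact htbot
  refine ⟨sbot, hlabel, hleave, fun t ht hsrc => ?_⟩
  by_cases htT : t ∈ T
  · exact absurd (Or.inl (Or.inl ⟨t, htT, (hT t htT).1 ▸ hsrc⟩)) hsbot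
  · exact hleave t ht htT

theorem satPath_of_forall_mem (h : IsMinExt S T ST) {Φ : Set (ℕ → Set AP)}
    (hnv : NotFoundViolation S T Φ) {e : ℕ → Tr} (he : ST.IsExec e) (hT : ∀ i, e i ∈ T) :
    ST.SatPath e Φ := by
  obtain ⟨-, -, -, -, -, -, -, -, -, -, hinit, hdata, -, -, -, -, -, hlabel⟩ := h
  obtain ⟨S', ⟨hS'T, hS'init, hS'data⟩, hS'⟩ := hnv
  have hsrc : ∀ i, S'.source (e i) = ST.source (e i) := fun i =>
    (hS'data _ (hT i)).1.trans (hdata _ (hT i)).1.symm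
  have hexec : S'.IsExec e := by
    refine ⟨fun i => hS'T _ (hT i), by rw [hsrc, he.2.1, hinit, hS'init], fun i => ?_⟩
    rw [(hS'data _ (hT i)).2.1, ← (hdata _ (hT i)).2.1, hsrc, he.2.2]
  have htrace : S'.traceOf e = ST.traceOf e := funext fun i => by
    simp only [PTS.traceOf]
    rw [(hS'data _ (hT i)).2.2.2.1, (hdata _ (hT i)).1,
      hlabel _ (Or.inl (Or.inl ⟨_, hT i, rfl⟩))]
  simpa only [PTS.SatPath, htrace] using hS' e hexec

end IsMinExt

theorem measure_diff_zero_of_not_found_violation_general {State Tr AP : Type}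
    (S ST : PTS State Tr AP) (T : Finset Tr)
    (hST : IsMinExt S T ST) (φ : LTLPlus AP)
    (μ : MeasureTheory.Measure (ℕ → Tr)) (hμ : CylSpec ST μ)
    (hnv : NotFoundViolation S T { ρ | LTLSat φ ρ }) :
    μ ({ e | ST.IsExec e ∧ ST.SatPath e { ρ | LTLSat φ ρ } } \
        ST.BPhi T { ρ | LTLSat φ ρ }) = 0 ∧
    μ (ST.BPhi T { ρ | LTLSat φ ρ }) =
      μ { e | ST.IsExec e ∧ ST.SatPath e { ρ | LTLSat φ ρ } } := by
  obtain ⟨sbot, hlabel, hleave, hsink⟩ := hST.exists_sink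
  have hnull := ST.measure_diff_BPhi_eq_zero hleave hsink hST.transitions_finite hlabel
    (fun _ he hT => hST.satPath_of_forall_mem hnv he hT) hμ
  exact ⟨hnull, measure_eq_measure_of_null_sdiff (ST.BPhi_subset_satPaths _ _) hnull⟩

/-- If `T` has not found a violation of the LTL⁺ formula `φ`,
then the paths of `S_T` satisfying `φ` outside `B_{S_T}^φ(T)` have measure
zero, hence `μ_{S_T}(B_{S_T}^φ(T)) = μ_{S_T}({e ∈ Exec_{S_T} : e ⊨ φ})`. -/
theorem measure_diff_zero_of_not_found_violation {State Tr AP : Type}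
    (S ST : PTS State Tr AP) (T : Finset Tr) (hT : ↑T ⊆ S.transitions)
    (hST : IsMinExt S T ST) (φ : LTLPlus AP)
    (μ : MeasureTheory.Measure (ℕ → Tr)) (hμ : CylSpec ST μ)
    (hnv : NotFoundViolation S T { ρ | LTLSat φ ρ }) :
    μ ({ e | ST.IsExec e ∧ ST.SatPath e { ρ | LTLSat φ ρ } } \
        ST.BPhi T { ρ | LTLSat φ ρ }) = 0 ∧
    μ (ST.BPhi T { ρ | LTLSat φ ρ }) =
      μ { e | ST.IsExec e ∧ ST.SatPath e { ρ | LTLSat φ ρ } } :=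
  measure_diff_zero_of_not_found_violation_general S ST T hST φ μ hμ hnv
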